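/- Let n ≥ 2, p ∈ ℝ^{n-1}, q ∈ ℝ^n, and let g(p,q) = I + (1+q_n²)·p·pᵀ + q_n·(p·(π q)ᵀ + (π q)·pᵀ) + (π q)·(π q)ᵀ. Then g(p,q) is a symmetric matrix, and for every vector v ∈ ℝ^{n-1}, vᵀ g(p,q) v = |v|² + (q_n (p·v) + (π q)·v)² + (p·v)² ≥ |v|². In particular g(p,q) is positive definite and hence invertible. -/

import Mathlib

/-! Completing the square in `qₙ` gives `g(p,q) = I + w wᵀ + p pᵀ` with `w = qₙ p + π q`, a
positive semidefinite perturbation of the identity; everything follows from this form. -/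

noncomputable section
open Matrix

/-- The metric-type matrix `g(p,q)` from the paper's Appendix (`m = n-1`). -/
def gMat (m : ℕ) (p : Fin m → ℝ) (q : Fin (m + 1) → ℝ) : Matrix (Fin m) (Fin m) ℝ :=
  1 + (1 + q (Fin.last m) ^ 2) • vecMulVec p p
    + q (Fin.last m) • (vecMulVec p (fun i => q i.castSucc) + vecMulVec (fun i => q i.castSucc) p)
    + vecMulVec (fun i => q i.castSucc) (fun i => q i.castSucc)

lemma dotProduct_vecMulVec_self_mulVec {n R : Type*} [Fintype n] [CommSemiring R]
    (a v : n → R) : v ⬝ᵥ vecMulVec a a *ᵥ v = (a ⬝ᵥ v) ^ 2 := by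
  rw [vecMulVec_mulVec, dotProduct_comm a v]
  simp [dotProduct_smul, sq]

lemma dotProduct_one_add_vecMulVec_add_vecMulVec_mulVec {n R : Type*} [Fintype n]
    [DecidableEq n] [CommSemiring R] (a b v : n → R) :
    v ⬝ᵥ (1 + vecMulVec a a + vecMulVec b b) *ᵥ v = v ⬝ᵥ v + (a ⬝ᵥ v) ^ 2 + (b ⬝ᵥ v) ^ 2 := by
  simp only [add_mulVec, one_mulVec, dotProduct_add, dotProduct_vecMulVec_self_mulVec]

lemma isSymm_one_add_vecMulVec_add_vecMulVec {n R : Type*} [DecidableEq n] [CommSemiring R]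
    (a b : n → R) : (1 + vecMulVec a a + vecMulVec b b).IsSymm :=
  (isSymm_one.add (transpose_vecMulVec a a)).add (transpose_vecMulVec b b)

lemma posDef_one_add_vecMulVec_add_vecMulVec {n : Type*} [Fintype n] [DecidableEq n]
    (a b : n → ℝ) : (1 + vecMulVec a a + vecMulVec b b).PosDef := by
  have hsq (c : n → ℝ) : (vecMulVec c c).PosSemidef := by
    simpa using posSemidef_vecMulVec_self_star c
  exact (PosDef.one.add_posSemidef (hsq a)).add_posSemidef (hsq b)

lemma gMat_eq (m : ℕ) (p : Fin m → ℝ) (q : Fin (m + 1) → ℝ) :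
    gMat m p q = 1 + vecMulVec (q (Fin.last m) • p + fun i => q i.castSucc)
      (q (Fin.last m) • p + fun i => q i.castSucc) + vecMulVec p p := by
  ext i j
  simp only [gMat, Matrix.add_apply, Matrix.smul_apply, vecMulVec_apply, Pi.add_apply,
    Pi.smul_apply, smul_eq_mul]
  ring

lemma dotProduct_gMat_mulVec (m : ℕ) (p : Fin m → ℝ) (q : Fin (m + 1) → ℝ) (v : Fin m → ℝ) :
    v ⬝ᵥ gMat m p q *ᵥ v = v ⬝ᵥ v
      + (q (Fin.last m) * (p ⬝ᵥ v) + (fun i => q i.castSucc) ⬝ᵥ v) ^ 2 + (p ⬝ᵥ v) ^ 2 := by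
  rw [gMat_eq, dotProduct_one_add_vecMulVec_add_vecMulVec_mulVec, add_dotProduct,
    smul_dotProduct, smul_eq_mul]

lemma EuclideanSpace.real_norm_sq_eq_dotProduct {n : Type*} [Fintype n]
    (v : EuclideanSpace ℝ n) : ‖v‖ ^ 2 = v ⬝ᵥ v := by
  rw [← real_inner_self_eq_norm_sq, EuclideanSpace.inner_eq_star_dotProduct]
  simp

theorem stmt1_general (m : ℕ)
    (p : Fin m → ℝ) (q : Fin (m + 1) → ℝ) :
    (gMat m p q).IsSymm ∧
    (∀ v : EuclideanSpace ℝ (Fin m),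
      v ⬝ᵥ (gMat m p q).mulVec v
        = ‖v‖ ^ 2
          + (q (Fin.last m) * (∑ i, p i * v i) + ∑ i, q i.castSucc * v i) ^ 2
          + (∑ i, p i * v i) ^ 2 ∧
      v ⬝ᵥ (gMat m p q).mulVec v ≥ ‖v‖ ^ 2) ∧
    (gMat m p q).PosDef ∧ IsUnit (gMat m p q) := by
  have hpd : (gMat m p q).PosDef := gMat_eq m p q ▸ posDef_one_add_vecMulVec_add_vecMulVec _ _
  refine ⟨gMat_eq m p q ▸ isSymm_one_add_vecMulVec_add_vecMulVec _ _, fun v => ?_,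
    hpd, hpd.isUnit⟩
  have hquad := dotProduct_gMat_mulVec m p q v
  rw [← EuclideanSpace.real_norm_sq_eq_dotProduct] at hquad
  exact ⟨hquad, hquad ▸ le_add_of_le_of_nonneg (le_add_of_nonneg_right (sq_nonneg _))
    (sq_nonneg _)⟩

/-- `g(p,q)` is symmetric, `vᵀ g(p,q) v = |v|² + (qₙ(p·v) + (πq)·v)² + (p·v)²
≥ |v|²`, and `g(p,q)` is positive definite and invertible. -/
theorem stmt1 (n : ℕ) (hn : 2 ≤ n) (m : ℕ) (hm : m + 1 = n)
    (p : Fin m → ℝ) (q : Fin (m + 1) → ℝ) :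
    (gMat m p q).IsSymm ∧
    (∀ v : EuclideanSpace ℝ (Fin m),
      v ⬝ᵥ (gMat m p q).mulVec v
        = ‖v‖ ^ 2
          + (q (Fin.last m) * (∑ i, p i * v i) + ∑ i, q i.castSucc * v i) ^ 2
          + (∑ i, p i * v i) ^ 2 ∧
      v ⬝ᵥ (gMat m p q).mulVec v ≥ ‖v‖ ^ 2) ∧
    (gMat m p q).PosDef ∧ IsUnit (gMat m p q) :=
  stmt1_general m p q
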